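/- Let P be a set of 4 points: the three vertices of an equilateral triangle of circumradius 1 together with the circumcenter. Then the Euclidean MST of P has weight 3, while every spanning tree of P whose angular span at each vertex is at most π has weight at least 2 + √3; hence the ratio wt(π-MST)/wt(MST) is at least (2+√3)/3. -/

import Mathlib

open Real

noncomputable section

abbrev Pl := EuclideanSpace ℝ (Fin 2)

def pt (x y : ℝ) : Pl := (EuclideanSpace.equiv (Fin 2) ℝ).symm ![x, y]

def dir (θ : ℝ) : Pl := pt (Real.cos θ) (Real.sin θ)

/-- Wedge with apex `p`, bisector orientation `θ`, angular width `α`. -/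
def wedge (p : Pl) (θ α : ℝ) : Set Pl :=
  {q | q = p ∨ InnerProductGeometry.angle (q - p) (dir θ) ≤ α / 2}

end

open scoped Classical in
/-- Total Euclidean edge weight of a geometric graph. -/
noncomputable def wt {V : Type*} [Fintype V] (G : SimpleGraph V) (pos : V → Pl) : ℝ :=
  (∑ p : V, ∑ q : V, if G.Adj p q then dist (pos p) (pos q) else 0) / 2

/-!
Every pair of the four points is at distance 1 (a spoke from the centre) or √3 (a side of the
triangle), and a spanning tree has three edges, so the star at the centre is a minimum spanning
tree of weight 3. A wedge of angle π is a closed half-plane, and the three spokes sum to zero, so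
no half-plane at the centre contains all of them. Hence a π-spanning tree misses some spoke `0i`,
and the edge by which `i` is joined to the rest of the tree is a side, of length √3.
-/

namespace SimpleGraph

theorem Connected.exists_adj_ne_of_not_adj {V : Type*} {G : SimpleGraph V} (hG : G.Connected)
    {c v : V} (hvc : v ≠ c) (hcv : ¬G.Adj c v) : ∃ w, G.Adj v w ∧ w ≠ c := by
  have : Nontrivial V := ⟨⟨v, c, hvc⟩⟩
  obtain ⟨w, hvw⟩ := hG.preconnected.exists_adj_of_nontrivial v
  exact ⟨w, hvw, by rintro rfl; exact hcv hvw.symm⟩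

variable {V M : Type*} [Fintype V] [AddCommMonoid M] (G : SimpleGraph V) [DecidableRel G.Adj]

theorem sum_sum_ite_adj_eq_two_nsmul_sum_edgeFinset (f : V → V → M) (hf : ∀ p q, f p q = f q p) :
    ∑ p, ∑ q, (if G.Adj p q then f p q else 0) = 2 • ∑ e ∈ G.edgeFinset, Sym2.lift ⟨f, hf⟩ e := by
  classical
  have hdarts : ∑ p, ∑ q, (if G.Adj p q then f p q else 0) = ∑ d : G.Dart, f d.fst d.snd := by
    rw [← Finset.sum_product', ← Finset.sum_filter]
    refine Finset.sum_bij' (fun x h ↦ ⟨x, (Finset.mem_filter.1 h).2⟩) (fun d _ ↦ (d.fst, d.snd))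
      ?_ ?_ ?_ ?_ ?_ <;> simp
  rw [hdarts, Finset.smul_sum, ← Finset.sum_fiberwise_of_maps_to (g := Dart.edge)
    (fun d _ ↦ G.mem_edgeFinset.2 d.edge_mem)]
  refine Finset.sum_congr rfl fun e he ↦ ?_
  induction e using Sym2.ind with
  | h v w =>
    let d : G.Dart := ⟨(v, w), G.mem_edgeFinset.1 he⟩
    rw [show s(v, w) = d.edge from rfl, Dart.edge_fiber, Finset.sum_pair d.symm_ne.symm, two_smul]
    exact congrArg (f v w + ·) (hf w v)

end SimpleGraph

open Finset InnerProductGeometry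
open scoped RealInnerProductSpace

theorem InnerProductGeometry.angle_le_pi_div_two_iff {E : Type*} [NormedAddCommGroup E]
    [InnerProductSpace ℝ E] (x y : E) : angle x y ≤ π / 2 ↔ 0 ≤ ⟪x, y⟫ := by
  rw [angle, arccos_le_pi_div_two]
  rcases eq_or_ne x 0 with rfl | hx
  · simp
  rcases eq_or_ne y 0 with rfl | hy
  · simp
  rw [le_div_iff₀ (by positivity), zero_mul]

section Weight

variable {V : Type*} [Fintype V] (G : SimpleGraph V) [Fintype G.edgeSet] (pos : V → Pl)

noncomputable def edgeLength : Sym2 V → ℝ :=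
  Sym2.lift ⟨fun p q ↦ dist (pos p) (pos q), fun _ _ ↦ dist_comm _ _⟩

theorem wt_eq_sum_edgeLength : wt G pos = ∑ e ∈ G.edgeFinset, edgeLength pos e := by
  classical
  rw [wt, G.sum_sum_ite_adj_eq_two_nsmul_sum_edgeFinset _ fun _ _ ↦ dist_comm _ _, nsmul_eq_mul,
    Nat.cast_ofNat, mul_div_cancel_left₀ _ two_ne_zero, edgeLength]
  congr!

variable {G pos}

theorem card_mul_le_wt {m : ℝ} (h : ∀ p q, G.Adj p q → m ≤ dist (pos p) (pos q)) :
    #G.edgeFinset * m ≤ wt G pos := by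
  rw [wt_eq_sum_edgeLength, ← nsmul_eq_mul]
  refine card_nsmul_le_sum _ _ _ fun e he ↦ ?_
  induction e using Sym2.ind with
  | h p q => exact h p q (G.mem_edgeFinset.1 he)

theorem wt_eq_card_mul {m : ℝ} (h : ∀ p q, G.Adj p q → dist (pos p) (pos q) = m) :
    wt G pos = #G.edgeFinset * m := by
  rw [wt_eq_sum_edgeLength, ← nsmul_eq_mul, ← sum_const]
  refine sum_congr rfl fun e he ↦ ?_
  induction e using Sym2.ind with
  | h p q => exact h p q (G.mem_edgeFinset.1 he)

theorem add_card_sub_one_mul_le_wt {m M : ℝ} (h : ∀ p q, G.Adj p q → m ≤ dist (pos p) (pos q))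
    {a b : V} (hab : G.Adj a b) (hM : M ≤ dist (pos a) (pos b)) :
    M + (#G.edgeFinset - 1 : ℝ) * m ≤ wt G pos := by
  classical
  have hmem : s(a, b) ∈ G.edgeFinset := G.mem_edgeFinset.2 hab
  rw [wt_eq_sum_edgeLength, ← add_sum_erase _ _ hmem]
  refine add_le_add hM ?_
  rw [← Nat.cast_pred (card_pos.2 ⟨_, hmem⟩), ← card_erase_of_mem hmem, ← nsmul_eq_mul]
  refine card_nsmul_le_sum _ _ _ fun e he ↦ ?_
  induction e using Sym2.ind with
  | h p q => exact h p q (G.mem_edgeFinset.1 (mem_of_mem_erase he))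

end Weight

theorem mem_wedge_pi_iff {p q : Pl} {θ : ℝ} : q ∈ wedge p θ π ↔ 0 ≤ ⟪q - p, dir θ⟫ := by
  rw [wedge, Set.mem_ofPred_eq, angle_le_pi_div_two_iff]
  constructor
  · rintro (rfl | h)
    · simp
    · exact h
  · exact Or.inr

theorem pt_sub_pt (a b c d : ℝ) : pt a b - pt c d = pt (a - c) (b - d) := by
  ext i; fin_cases i <;> simp [pt]

theorem dist_pt (a b c d : ℝ) : dist (pt a b) (pt c d) = √((a - c) ^ 2 + (b - d) ^ 2) := by
  simp [pt, EuclideanSpace.dist_eq, Fin.sum_univ_two, Real.dist_eq, sq_abs]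

theorem inner_pt_dir (a b θ : ℝ) : ⟪pt a b, dir θ⟫ = a * cos θ + b * sin θ := by
  simp [pt, dir, PiLp.inner_apply, Fin.sum_univ_two]
  ring

noncomputable def triangleWithCenter : Fin 4 → Pl :=
  ![pt 0 0, pt 1 0, pt (-(1 / 2)) (√3 / 2), pt (-(1 / 2)) (-(√3 / 2))]

theorem dist_triangleWithCenter {i j : Fin 4} (hij : i ≠ j) :
    dist (triangleWithCenter i) (triangleWithCenter j) = if i = 0 ∨ j = 0 then 1 else √3 := by
  have h3 : √3 ^ 2 = 3 := sq_sqrt (by norm_num)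
  fin_cases i <;> fin_cases j <;> simp [triangleWithCenter, dist_pt] at hij ⊢ <;>
    first
    | linear_combination h3 / 4
    | (congr 1; linear_combination h3 / 4)
    | (congr 1; linear_combination h3)

theorem exists_not_mem_wedge_pi_triangleWithCenter (θ : ℝ) :
    ∃ i ≠ 0, triangleWithCenter i ∉ wedge (triangleWithCenter 0) θ π := by
  by_contra! h
  have h1 := mem_wedge_pi_iff.1 (h 1 (by decide))
  have h2 := mem_wedge_pi_iff.1 (h 2 (by decide))
  have h3 := mem_wedge_pi_iff.1 (h 3 (by decide))
  simp only [triangleWithCenter, Matrix.cons_val, pt_sub_pt, inner_pt_dir] at h1 h2 h3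
  have hcos : cos θ = 0 := by linarith
  have hsin : sin θ = 0 := by
    have : √3 * sin θ = 0 := by linarith
    simpa using this
  simpa [hcos, hsin] using sin_sq_add_cos_sq θ

theorem one_le_dist_triangleWithCenter {i j : Fin 4} (hij : i ≠ j) :
    1 ≤ dist (triangleWithCenter i) (triangleWithCenter j) := by
  rw [dist_triangleWithCenter hij]
  split_ifs
  · rfl
  · exact one_le_sqrt.2 (by norm_num)

theorem card_edgeFinset_of_isTree_fin_four {T : SimpleGraph (Fin 4)} [Fintype T.edgeSet]
    (hT : T.IsTree) : #T.edgeFinset = 3 := by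
  have := hT.card_edgeFinset
  rw [Fintype.card_fin] at this
  omega

/-- For the three vertices of an equilateral triangle of circumradius 1 together
with the circumcenter, the Euclidean MST has weight 3, while every spanning tree
whose angular span at each vertex is at most π has weight at least `2 + √3`. -/
theorem stmt8 (pts : Fin 4 → Pl)
    (h0 : pts 0 = pt 0 0)
    (h1 : pts 1 = pt 1 0)
    (h2 : pts 2 = pt (-(1 / 2)) (Real.sqrt 3 / 2))
    (h3 : pts 3 = pt (-(1 / 2)) (-(Real.sqrt 3 / 2))) :
    (∀ T : SimpleGraph (Fin 4), T.IsTree → wt T pts ≥ 3) ∧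
    (∃ T : SimpleGraph (Fin 4), T.IsTree ∧ wt T pts = 3) ∧
    (∀ T : SimpleGraph (Fin 4), T.IsTree →
      (∀ p : Fin 4, ∃ θ : ℝ, ∀ q : Fin 4, T.Adj p q → pts q ∈ wedge (pts p) θ π) →
      wt T pts ≥ 2 + Real.sqrt 3) := by
  classical
  obtain rfl : pts = triangleWithCenter := by
    funext i
    fin_cases i <;> assumption
  have hdist (T : SimpleGraph (Fin 4)) : ∀ p q, T.Adj p q →
      1 ≤ dist (triangleWithCenter p) (triangleWithCenter q) :=
    fun p q hpq ↦ one_le_dist_triangleWithCenter hpq.ne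
  refine ⟨fun T hT ↦ ?_, ⟨_, SimpleGraph.isTree_starGraph 0, ?_⟩, fun T hT hwedge ↦ ?_⟩
  · simpa [card_edgeFinset_of_isTree_fin_four hT] using card_mul_le_wt (hdist T)
  · rw [wt_eq_card_mul (m := 1),
      card_edgeFinset_of_isTree_fin_four (SimpleGraph.isTree_starGraph 0)]
    · norm_num
    · intro p q hpq
      rw [dist_triangleWithCenter hpq.ne, if_pos (SimpleGraph.starGraph_adj.1 hpq).2]
  · obtain ⟨θ, hθ⟩ := hwedge 0
    obtain ⟨i, hi, hiθ⟩ := exists_not_mem_wedge_pi_triangleWithCenter θ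
    obtain ⟨j, hij, hj⟩ := hT.connected.exists_adj_ne_of_not_adj hi fun h0i ↦ hiθ (hθ i h0i)
    have hij_long : √3 ≤ dist (triangleWithCenter i) (triangleWithCenter j) :=
      ((dist_triangleWithCenter hij.ne).trans (if_neg (not_or.2 ⟨hi, hj⟩))).ge
    have := add_card_sub_one_mul_le_wt (hdist T) hij hij_long
    rw [card_edgeFinset_of_isTree_fin_four hT] at this
    norm_num at this
    linarith
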